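/- arXiv:1101.2994 — 4 statements merged into one kernel-verified Lean document; each statement's English description precedes it below -/
import Mathlib

section
/- Let G be a finite abelian group of order v, let D be a subset of G of size k, and let λ be a positive integer. Then D is a (v,k,λ)-difference set in G, i.e., every nonidentity element g of G has exactly λ representations g = x·y^{-1} with x,y ∈ D, if and only if χ(D)·conjugate(χ(D)) = k − λ for every nontrivial complex character χ of G, where χ(D) = Σ_{d∈D} χ(d). -/
/-!
Write `N g` for the number of representations `g = x * y⁻¹` with `x, y ∈ D`. Since
`conj (χ y) = χ y⁻¹`, the product `χ(D) * conj χ(D)` is the Fourier coefficient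
`∑ g, N g * χ g`. Always `N 1 = k`, so `D` is a difference set exactly when `N` equals the
function `T` that is `k` at `1` and `λ` elsewhere, whose coefficient at every nontrivial `χ` is
`k - λ`. By the orthogonality relations, a function on `G` is determined by its value at `1`
together with its coefficients at the nontrivial characters.
-/

open Finset ComplexConjugate

section Characters

variable {G : Type*} [CommGroup G] [Fintype G]

lemma MonoidHom.map_inv_eq_conj (χ : G →* ℂ) (g : G) : χ g⁻¹ = conj (χ g) :=
  AddChar.map_neg_eq_conj (AddChar.toMonoidHomEquiv.symm χ) (Additive.ofMul g)

lemma card_mul_apply_eq_sum_of_sum_mul_char_eq_zero {f : G → ℂ}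
    (hf : ∀ χ : G →* ℂ, χ ≠ 1 → ∑ g, f g * χ g = 0) (a : G) :
    Fintype.card G * f a = ∑ g, f g := by
  classical
  -- Characters of `G` are the additive characters of `Additive G`, where orthogonality is available.
  calc (Fintype.card G : ℂ) * f a
      = ∑ g, f g * ∑ ψ : AddChar (Additive G) ℂ, ψ (.ofMul (g * a⁻¹)) := by
        simp only [AddChar.sum_apply_eq_ite, ofMul_eq_zero, mul_inv_eq_one, Fintype.card_additive,
          mul_ite, mul_zero, sum_ite_eq', mem_univ, if_true, mul_comm]
    _ = ∑ ψ : AddChar (Additive G) ℂ, ψ (.ofMul a⁻¹) * ∑ g, f g * ψ (.ofMul g) := by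
        simp_rw [mul_sum]
        rw [sum_comm]
        refine sum_congr rfl fun ψ _ => sum_congr rfl fun g _ => ?_
        rw [ofMul_mul, AddChar.map_add_eq_mul]
        ring
    _ = ∑ g, f g := by
        rw [sum_eq_single 0]
        · simp
        · intro ψ _ hψ
          have hχ : AddChar.toMonoidHomEquiv ψ ≠ 1 := by
            rwa [← AddChar.toMonoidHomEquiv_zero, Ne, EmbeddingLike.apply_eq_iff_eq]
          rw [show ∑ g, f g * ψ (.ofMul g) = 0 from hf _ hχ, mul_zero]
        · simp

lemma eq_iff_forall_ne_one_sum_mul_char_eq {f₁ f₂ : G → ℂ} (h₁ : f₁ 1 = f₂ 1) :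
    f₁ = f₂ ↔ ∀ χ : G →* ℂ, χ ≠ 1 → ∑ g, f₁ g * χ g = ∑ g, f₂ g * χ g := by
  refine ⟨fun h _ _ => h ▸ rfl, fun h => funext fun a => ?_⟩
  have hdiff (χ : G →* ℂ) (hχ : χ ≠ 1) : ∑ g, (f₁ - f₂) g * χ g = 0 := by
    simp only [Pi.sub_apply, sub_mul, sum_sub_distrib, h χ hχ, sub_self]
  have hcard : (Fintype.card G : ℂ) ≠ 0 := Nat.cast_ne_zero.mpr Fintype.card_ne_zero
  have hconst := (card_mul_apply_eq_sum_of_sum_mul_char_eq_zero hdiff a).trans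
    (card_mul_apply_eq_sum_of_sum_mul_char_eq_zero hdiff 1).symm
  simp only [Pi.sub_apply, h₁, sub_self, mul_zero] at hconst
  exact sub_eq_zero.mp ((mul_eq_zero.mp hconst).resolve_left hcard)

lemma sum_ite_eq_one_mul_char [DecidableEq G] {χ : G →* ℂ} (hχ : χ ≠ 1) (a b : ℂ) :
    ∑ g, (if g = 1 then a else b) * χ g = a - b :=
  calc ∑ g, (if g = 1 then a else b) * χ g
      = ∑ g, (b * χ g + if g = 1 then a - b else 0) :=
        sum_congr rfl fun g _ => by split_ifs with hg <;> simp [hg]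
    _ = a - b := by rw [sum_add_distrib, ← mul_sum, sum_hom_units_eq_zero χ hχ]; simp

end Characters

namespace Finset

variable {G : Type*} [CommGroup G] [DecidableEq G]

def diffCount (D : Finset G) (g : G) : ℕ := #{xy ∈ D ×ˢ D | xy.1 * xy.2⁻¹ = g}

lemma diffCount_one (D : Finset G) : D.diffCount 1 = #D := by
  simp only [diffCount, mul_inv_eq_one, ← diag_eq_filter, diag_card]

lemma sum_mul_conj_sum_eq_sum_diffCount [Fintype G] (D : Finset G) (χ : G →* ℂ) :
    (∑ d ∈ D, χ d) * conj (∑ d ∈ D, χ d) = ∑ g, (D.diffCount g : ℂ) * χ g := by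
  simp only [map_sum, ← MonoidHom.map_inv_eq_conj, sum_mul_sum, ← map_mul, ← sum_product']
  rw [← sum_fiberwise (D ×ˢ D) (fun xy => xy.1 * xy.2⁻¹)]
  refine sum_congr rfl fun g _ => ?_
  rw [sum_congr rfl fun xy hxy => congrArg χ (mem_filter.mp hxy).2, sum_const, nsmul_eq_mul]
  rfl

end Finset

theorem diff_set_iff_char_sum_general {G : Type*} [CommGroup G] [Fintype G] [DecidableEq G]
    (k lam : ℕ)
    (D : Finset G) (hk : D.card = k) :
    (∀ g : G, g ≠ 1 →
        ((D ×ˢ D).filter (fun xy : G × G => xy.1 * xy.2⁻¹ = g)).card = lam) ↔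
      (∀ χ : G →* ℂ, χ ≠ 1 →
        (∑ d ∈ D, χ d) * (starRingEnd ℂ) (∑ d ∈ D, χ d) = (k : ℂ) - (lam : ℂ)) := by
  have hcount : (fun g => (D.diffCount g : ℂ)) = (fun g => if g = 1 then (k : ℂ) else lam) ↔
      ∀ g : G, g ≠ 1 → D.diffCount g = lam := by
    refine ⟨fun h g hg => by exact_mod_cast (congrFun h g).trans (if_neg hg), fun h => ?_⟩
    funext g
    split_ifs with hg
    · rw [hg, D.diffCount_one, hk]
    · exact_mod_cast h g hg
  refine hcount.symm.trans ?_
  rw [eq_iff_forall_ne_one_sum_mul_char_eq (by simp [D.diffCount_one, hk])]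
  simp only [D.sum_mul_conj_sum_eq_sum_diffCount]
  exact forall₂_congr fun χ hχ => by rw [sum_ite_eq_one_mul_char hχ]

/-- **Characterization of difference sets by characters.**
Let `G` be a finite abelian group of order `v`, `D ⊆ G` of size `k`, and `lam` a positive
integer. Then `D` is a `(v, k, lam)`-difference set in `G` (every nonidentity `g ∈ G` has
exactly `lam` representations `g = x * y⁻¹` with `x, y ∈ D`) if and only if
`χ(D) * conj (χ(D)) = k - lam` for every nontrivial complex character `χ` of `G`,
where `χ(D) = ∑ d ∈ D, χ d`. -/
theorem diff_set_iff_char_sum {G : Type*} [CommGroup G] [Fintype G] [DecidableEq G]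
    (v k lam : ℕ) (hlam : 0 < lam) (hv : Fintype.card G = v)
    (D : Finset G) (hk : D.card = k) :
    (∀ g : G, g ≠ 1 →
        ((D ×ˢ D).filter (fun xy : G × G => xy.1 * xy.2⁻¹ = g)).card = lam) ↔
      (∀ χ : G →* ℂ, χ ≠ 1 →
        (∑ d ∈ D, χ d) * (starRingEnd ℂ) (∑ d ∈ D, χ d) = (k : ℂ) - (lam : ℂ)) :=
  diff_set_iff_char_sum_general k lam D hk
end

section
/- Let p_1 be an odd prime, m ≥ 1, N = 2p_1^m, and let p be a prime with gcd(p,N) = 1 whose multiplicative order modulo N equals φ(N)/2 and such that −1 is not in the subgroup ⟨p⟩ of (ℤ/Nℤ)^*. Then for every odd integer j with 1 ≤ j ≤ N−1 there exist integers r ≥ 0 and t with 0 ≤ t ≤ m such that j ≡ p^r·p_1^t (mod N) or j ≡ −p^r·p_1^t (mod N). -/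
/-!
Write `j = p₁ ^ t * u` with `p₁ ∤ u`. Since `j` is odd and `j < 2 p₁ ^ m`, we get `t ≤ m` and `u`
is a unit modulo `N`. The powers of `p` form a subgroup of index two in `(ℤ/Nℤ)ˣ` not containing
`-1`, so its two cosets are `⟨p⟩` and `-⟨p⟩`, and `u` lies in one of them.
-/

theorem exists_pow_eq_or_eq_mul_pow_of_two_mul_orderOf_eq_card {G : Type*} [Group G] [Finite G]
    {g a : G} (hcard : 2 * orderOf g = Nat.card G) (ha : ∀ k : ℕ, g ^ k ≠ a) (x : G) :
    ∃ r : ℕ, x = g ^ r ∨ x = a * g ^ r := by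
  have hindex : (Subgroup.zpowers g).index = 2 := by
    have h := (Subgroup.zpowers g).card_mul_index
    rw [Nat.card_zpowers, ← hcard, mul_comm 2] at h
    exact Nat.eq_of_mul_eq_mul_left (orderOf_pos g) h
  have hmem : ∀ y : G, y ∈ Subgroup.zpowers g → ∃ r : ℕ, g ^ r = y := fun y hy =>
    mem_powers_iff_mem_zpowers.mpr hy
  have ha_notMem : a⁻¹ ∉ Subgroup.zpowers g := fun h => by
    obtain ⟨k, hk⟩ := hmem a (inv_inv a ▸ inv_mem h)
    exact ha k hk
  by_cases hx : x ∈ Subgroup.zpowers g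
  · obtain ⟨r, hr⟩ := hmem x hx
    exact ⟨r, .inl hr.symm⟩
  · have hax : a⁻¹ * x ∈ Subgroup.zpowers g :=
      (Subgroup.mul_mem_iff_of_index_two hindex).mpr (iff_of_false ha_notMem hx)
    obtain ⟨r, hr⟩ := hmem _ hax
    exact ⟨r, .inr (by rw [hr, mul_inv_cancel_left])⟩

theorem ZMod.exists_natCast_eq_pow_or_eq_neg_pow {N p : ℕ} [NeZero N] (hp : p.Coprime N)
    (hord : orderOf (p : ZMod N) = N.totient / 2) (heven : Even N.totient)
    (hneg : ∀ k : ℕ, (p : ZMod N) ^ k ≠ -1) {u : ℕ} (hu : u.Coprime N) :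
    ∃ r : ℕ, (u : ZMod N) = (p : ZMod N) ^ r ∨ (u : ZMod N) = -(p : ZMod N) ^ r := by
  set g := ZMod.unitOfCoprime p hp
  have hgval : (g : ZMod N) = p := ZMod.coe_unitOfCoprime p hp
  have hcard : 2 * orderOf g = Nat.card (ZMod N)ˣ := by
    rw [Nat.card_eq_fintype_card, ZMod.card_units_eq_totient, ← orderOf_units, hgval, hord,
      Nat.mul_div_cancel' heven.two_dvd]
  have hg : ∀ k : ℕ, g ^ k ≠ -1 := fun k h =>
    hneg k (by simpa [hgval] using congrArg Units.val h)
  obtain ⟨r, hr⟩ :=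
    exists_pow_eq_or_eq_mul_pow_of_two_mul_orderOf_eq_card hcard hg (ZMod.unitOfCoprime u hu)
  refine ⟨r, hr.imp (fun h => ?_) (fun h => ?_)⟩ <;> simpa [hgval] using congrArg Units.val h

theorem Nat.exists_pow_mul_eq_of_odd_of_lt_two_mul_pow {p j m : ℕ} (hp : p.Prime) (hj : Odd j)
    (hjlt : j < 2 * p ^ m) : ∃ t u : ℕ, t ≤ m ∧ p ^ t * u = j ∧ u.Coprime (2 * p ^ m) := by
  have hj0 : j ≠ 0 := hj.pos.ne'
  refine ⟨j.factorization p, j / p ^ j.factorization p, ?_, Nat.ordProj_mul_ordCompl_eq_self j p,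
    ?_⟩
  · by_contra! hlt
    have hle : p ^ (m + 1) ≤ j :=
      Nat.le_of_dvd hj.pos ((pow_dvd_pow p hlt).trans (Nat.ordProj_dvd j p))
    have : 2 * p ^ m ≤ p ^ (m + 1) := by
      rw [pow_succ, mul_comm 2]
      exact Nat.mul_le_mul_left _ hp.two_le
    omega
  · have hodd : Odd (j / p ^ j.factorization p) :=
      (Nat.odd_mul.mp ((Nat.ordProj_mul_ordCompl_eq_self j p).symm ▸ hj)).2
    exact Nat.Coprime.mul_right hodd.coprime_two_right
      (((hp.coprime_iff_not_dvd).mpr (Nat.not_dvd_ordCompl hp hj0)).symm.pow_right m)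

theorem odd_residues_classification_general (p1 m N p : ℕ) (hp1 : p1.Prime)
    (hm : 1 ≤ m) (hN : N = 2 * p1 ^ m)
    (hgcd : Nat.gcd p N = 1) (hord : orderOf (p : ZMod N) = N.totient / 2)
    (hnotin : ∀ k : ℕ, (p : ZMod N) ^ k ≠ -1)
    (j : ℕ) (hj2 : j ≤ N - 1) (hjodd : Odd j) :
    ∃ r t : ℕ, t ≤ m ∧
      ((j : ZMod N) = (p : ZMod N) ^ r * (p1 : ZMod N) ^ t ∨
        (j : ZMod N) = -((p : ZMod N) ^ r * (p1 : ZMod N) ^ t)) := by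
  have hN2 : 2 < N := by
    have : 2 ≤ p1 ^ m := hp1.two_le.trans (Nat.le_self_pow (by omega) p1)
    omega
  have : NeZero N := ⟨by omega⟩
  obtain ⟨t, u, htm, rfl, hu⟩ :=
    Nat.exists_pow_mul_eq_of_odd_of_lt_two_mul_pow hp1 hjodd (by omega : j < 2 * p1 ^ m)
  obtain ⟨r, hr⟩ := ZMod.exists_natCast_eq_pow_or_eq_neg_pow hgcd hord (Nat.totient_even hN2)
    hnotin (hN ▸ hu)
  refine ⟨r, t, htm, ?_⟩
  push_cast
  rcases hr with hr | hr <;> [left; right] <;> rw [hr] <;> ring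

/-- **Classification of odd residues modulo `N = 2 p₁^m` in the index 2 case.**
Let `p₁` be an odd prime, `m ≥ 1`, `N = 2 p₁ ^ m`, and let `p` be a prime with
`gcd(p, N) = 1` whose multiplicative order modulo `N` equals `φ(N)/2` and such that
`-1` is not in the subgroup `⟨p⟩` of `(ℤ/Nℤ)ˣ`. Then every odd integer `j` with
`1 ≤ j ≤ N - 1` satisfies `j ≡ p^r p₁^t (mod N)` or `j ≡ -p^r p₁^t (mod N)` for some
`r ≥ 0` and `0 ≤ t ≤ m`. -/
theorem odd_residues_classification (p1 m N p : ℕ) (hp1 : p1.Prime) (hp1odd : Odd p1)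
    (hm : 1 ≤ m) (hN : N = 2 * p1 ^ m) (hp : p.Prime)
    (hgcd : Nat.gcd p N = 1) (hord : orderOf (p : ZMod N) = N.totient / 2)
    (hnotin : ∀ k : ℕ, (p : ZMod N) ^ k ≠ -1)
    (j : ℕ) (hj1 : 1 ≤ j) (hj2 : j ≤ N - 1) (hjodd : Odd j) :
    ∃ r t : ℕ, t ≤ m ∧
      ((j : ZMod N) = (p : ZMod N) ^ r * (p1 : ZMod N) ^ t ∨
        (j : ZMod N) = -((p : ZMod N) ^ r * (p1 : ZMod N) ^ t)) :=
  odd_residues_classification_general p1 m N p hp1 hm hN hgcd hord hnotin j hj2 hjodd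
end

section
/- Let p_1 be a prime with p_1 ≡ 3 (mod 4), m ≥ 1, N = 2p_1^m, and let p be a prime with p ≡ 3 (mod 4), gcd(p,N) = 1, whose multiplicative order modulo N equals φ(N)/2. Set f = φ(N)/2 and q = p^f, and let s be an odd positive integer. Then (q^s − 1)/2 ≡ p_1^m (mod N); consequently, for any primitive element γ of the field E = F_{q^s}, the element −1 of E lies in the cyclotomic class C_{p_1^m} of order N of E. -/
/-!
Since `p` has order `f` modulo `N`, `q = p ^ f ≡ 1 (mod N)`, hence `q ^ s ≡ 1 (mod N)`.
As `p₁ ≡ 3 (mod 4)`, `f = p₁ ^ (m - 1) (p₁ - 1) / 2` is odd, so `q ^ s = p ^ (f s) ≡ 3 (mod 4)`.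
Writing `q ^ s - 1 = N j`, the second congruence forces `j` to be odd, and then
`(q ^ s - 1) / 2 = p₁ ^ m j ≡ p₁ ^ m (mod 2 p₁ ^ m)`. Finally `γ ^ ((q ^ s - 1) / 2)` is a primitive
square root of unity, i.e. `-1`.
-/

theorem IsPrimitiveRoot.pow_eq_neg_one_of_two_mul {R : Type*} [CommRing R] [NoZeroDivisors R]
    {ζ : R} {e : ℕ} (h : IsPrimitiveRoot ζ (2 * e)) (he : e ≠ 0) : ζ ^ e = -1 :=
  eq_neg_one_of_two_right (by simpa [he] using h.pow_of_dvd he (dvd_mul_left e 2))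

namespace Nat

theorem pow_mod_four_eq_three {p n : ℕ} (hp : p % 4 = 3) (hn : Odd n) : p ^ n % 4 = 3 := by
  obtain ⟨k, rfl⟩ := hn
  rw [Nat.pow_mod, hp, pow_succ, pow_mul, Nat.mul_mod, Nat.pow_mod]
  norm_num

theorem odd_totient_two_mul_prime_pow_div_two {p m : ℕ} (hp : p.Prime) (hp4 : p % 4 = 3)
    (hm : m ≠ 0) : Odd (φ (2 * p ^ m) / 2) := by
  have hp_odd : Odd p := Nat.odd_iff.mpr (by omega)
  rw [totient_two_mul_of_odd hp_odd.pow, totient_prime_pow hp (Nat.pos_of_ne_zero hm),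
    Nat.mul_div_assoc _ (by omega : 2 ∣ p - 1)]
  exact hp_odd.pow.mul (Nat.odd_iff.mpr (by omega))

theorem half_pred_modEq_of_modEq_one {q a : ℕ} (hq : q ≡ 1 [MOD 2 * a])
    (hq4 : q % 4 = 3) : (q - 1) / 2 ≡ a [MOD 2 * a] := by
  obtain ⟨j, hj⟩ := (Nat.modEq_iff_dvd' (by omega)).mp hq.symm
  obtain ⟨t, rfl⟩ : Odd j := by
    by_contra hj_even
    obtain ⟨t, rfl⟩ := Nat.not_odd_iff_even.mp hj_even
    have : q - 1 = 4 * (a * t) := by rw [hj]; ring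
    omega
  have hq_half : q - 1 = 2 * (a + 2 * a * t) := by rw [hj]; ring
  rw [hq_half, Nat.mul_div_cancel_left _ two_pos]
  exact Nat.add_mul_mod_self_left a (2 * a) t

end Nat

theorem neg_one_mem_cyclotomic_class_general (p1 m N p f q s : ℕ)
    (hp1 : p1.Prime) (hp1mod : p1 % 4 = 3) (hm : 1 ≤ m) (hN : N = 2 * p1 ^ m)
    (hpmod : p % 4 = 3)
    (hord : orderOf (p : ZMod N) = N.totient / 2)
    (hf : f = N.totient / 2) (hq : q = p ^ f) (hs : Odd s) :
    (q ^ s - 1) / 2 ≡ p1 ^ m [MOD N] ∧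
      ∀ (E : Type) (_ : Field E) (_ : Fintype E), Fintype.card E = q ^ s →
        ∀ γ : Eˣ, orderOf γ = q ^ s - 1 →
          ∃ k : ℕ, (-1 : E) = (γ : E) ^ (p1 ^ m + N * k) := by
  have hq1 : q ≡ 1 [MOD N] := by
    rw [← ZMod.natCast_eq_natCast_iff, hq, hf, ← hord]
    push_cast
    exact pow_orderOf_eq_one _
  have hf_odd : Odd f := hf ▸ hN ▸ Nat.odd_totient_two_mul_prime_pow_div_two hp1 hp1mod (by omega)
  have hqs4 : q ^ s % 4 = 3 := by
    rw [hq, ← pow_mul]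
    exact Nat.pow_mod_four_eq_three hpmod (hf_odd.mul hs)
  have hcong : (q ^ s - 1) / 2 ≡ p1 ^ m [MOD N] :=
    hN ▸ Nat.half_pred_modEq_of_modEq_one (hN ▸ by simpa using hq1.pow s) hqs4
  refine ⟨hcong, fun E _ _ _ γ hγ ↦ ⟨(q ^ s - 1) / 2 / N, ?_⟩⟩
  have hexp : p1 ^ m + N * ((q ^ s - 1) / 2 / N) = (q ^ s - 1) / 2 := by
    have hlt : p1 ^ m < N := by have := pow_pos hp1.pos m; omega
    rw [← Nat.mod_eq_of_lt hlt, ← hcong, Nat.mod_add_div]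
  have hprim : IsPrimitiveRoot (γ : E) (2 * ((q ^ s - 1) / 2)) := by
    rw [IsPrimitiveRoot.coe_units_iff, show 2 * ((q ^ s - 1) / 2) = q ^ s - 1 by omega, ← hγ]
    exact IsPrimitiveRoot.orderOf γ
  rw [hexp, hprim.pow_eq_neg_one_of_two_mul (by omega)]

/-- **`-1` lies in the cyclotomic class `C_{p₁^m}`.**
Let `p₁` be a prime with `p₁ ≡ 3 (mod 4)`, `m ≥ 1`, `N = 2 p₁ ^ m`, and let `p` be a
prime with `p ≡ 3 (mod 4)`, `gcd(p, N) = 1`, whose multiplicative order modulo `N` is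
`φ(N)/2 = f`. Let `q = p ^ f` and let `s` be an odd positive integer. Then
`(q^s - 1)/2 ≡ p₁^m (mod N)`; consequently, for any finite field `E` of order `q^s`
with primitive element `γ`, the element `-1 = γ^{(q^s-1)/2}` of `E` lies in the
cyclotomic class `C_{p₁^m} = γ^{p₁^m} ⟨γ^N⟩` of order `N` of `E`. -/
theorem neg_one_mem_cyclotomic_class (p1 m N p f q s : ℕ)
    (hp1 : p1.Prime) (hp1mod : p1 % 4 = 3) (hm : 1 ≤ m) (hN : N = 2 * p1 ^ m)
    (hp : p.Prime) (hpmod : p % 4 = 3) (hgcd : Nat.gcd p N = 1)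
    (hord : orderOf (p : ZMod N) = N.totient / 2)
    (hf : f = N.totient / 2) (hq : q = p ^ f) (hs : Odd s) (hs0 : 0 < s) :
    (q ^ s - 1) / 2 ≡ p1 ^ m [MOD N] ∧
      ∀ (E : Type) (_ : Field E) (_ : Fintype E), Fintype.card E = q ^ s →
        ∀ γ : Eˣ, orderOf γ = q ^ s - 1 →
          ∃ k : ℕ, (-1 : E) = (γ : E) ^ (p1 ^ m + N * k) :=
  neg_one_mem_cyclotomic_class_general p1 m N p f q s hp1 hp1mod hm hN hpmod hord hf hq hs
end

section
/- For every positive integer m, the multiplicative order of 11 modulo 2·7^m equals 3·7^{m-1}, which is φ(2·7^m)/2; moreover −1 is not in the subgroup of (ℤ/2·7^mℤ)^* generated by 11. -/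
/-! Since `11 ^ 3 = 1 + 7 * 190` with `7 ∤ 190`, the order of `11 ^ 3` modulo `7 ^ (n + 1)` is `7 ^ n`,
and `11` has order `3` modulo `7`, so the order of `11` modulo `7 ^ (n + 1)` is `3 * 7 ^ n`.
As `11` is odd, the factor `2` of the modulus does not change the order. An element of odd order
has no power equal to `-1`. -/

namespace ZMod

theorem orderOf_intCast_prime_pow {p d : ℕ} (hp : p.Prime) (hp2 : p ≠ 2) {a b : ℤ}
    (hd : orderOf (a : ZMod p) = d) (hab : a ^ d = 1 + p * b) (hb : ¬ (p : ℤ) ∣ b) (n : ℕ) :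
    orderOf (a : ZMod (p ^ (n + 1))) = d * p ^ n := by
  have hd0 : d ≠ 0 := by
    rintro rfl
    exact hb (by simp_all [hp.ne_zero])
  have hd_dvd : d ∣ orderOf (a : ZMod (p ^ (n + 1))) := by
    rw [← hd, ← map_intCast (castHom (dvd_pow_self p n.succ_ne_zero) (ZMod p))]
    exact orderOf_map_dvd _ _
  have hpow : orderOf ((a : ZMod (p ^ (n + 1))) ^ d) = p ^ n := by
    rw [← Int.cast_pow, hab, Int.cast_add, Int.cast_one, Int.cast_mul, Int.cast_natCast]
    exact orderOf_one_add_mul_prime hp hp2 b hb n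
  rw [orderOf_pow_of_dvd hd0 hd_dvd] at hpow
  rw [← hpow, Nat.mul_div_cancel' hd_dvd]

theorem orderOf_intCast_mul_of_eq_one {k n : ℕ} (hkn : k.Coprime n) {a : ℤ}
    (ha : (a : ZMod k) = 1) : orderOf (a : ZMod (k * n)) = orderOf (a : ZMod n) := by
  rw [← (chineseRemainder hkn).toMulEquiv.orderOf_eq, Prod.orderOf]
  simp [ha]

end ZMod

theorem pow_ne_neg_one_of_odd_orderOf {R : Type*} [Ring R] {x : R} (hx : Odd (orderOf x))
    (hR : (-1 : R) ≠ 1) (k : ℕ) : x ^ k ≠ -1 := by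
  intro hk
  have hsq : x ^ (k * 2) = 1 := by rw [pow_mul, hk, neg_one_sq]
  have hdvd : orderOf x ∣ k :=
    (Nat.coprime_two_right.mpr hx).dvd_of_dvd_mul_right (orderOf_dvd_of_pow_eq_one hsq)
  exact hR (hk ▸ orderOf_dvd_iff_pow_eq_one.mp hdvd)

theorem orderOf_eleven_mod_seven : orderOf (11 : ZMod 7) = 3 := by
  have : Fact (Nat.Prime 3) := ⟨Nat.prime_three⟩
  exact orderOf_eq_prime (by decide) (by decide)

theorem orderOf_eleven_mod_seven_pow (n : ℕ) :
    orderOf (11 : ZMod (7 ^ (n + 1))) = 3 * 7 ^ n := by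
  exact_mod_cast ZMod.orderOf_intCast_prime_pow (a := 11) (b := 190) (by norm_num) (by norm_num)
    (by exact_mod_cast orderOf_eleven_mod_seven) (by norm_num) (by decide) n

/-- **The order of `11` modulo `2·7^m`.**
For every positive integer `m`, the multiplicative order of `11` modulo `2·7^m` equals
`3·7^(m-1)`, which is `φ(2·7^m)/2`; moreover `-1` is not in the subgroup of
`(ℤ/2·7^mℤ)ˣ` generated by `11` (equivalently, no power of `11` is `≡ -1`). -/
theorem orderOf_eleven_mod_two_mul_seven_pow (m : ℕ) (hm : 1 ≤ m) :
    orderOf (11 : ZMod (2 * 7 ^ m)) = 3 * 7 ^ (m - 1) ∧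
    3 * 7 ^ (m - 1) = (2 * 7 ^ m).totient / 2 ∧
    ∀ k : ℕ, (11 : ZMod (2 * 7 ^ m)) ^ k ≠ -1 := by
  obtain ⟨n, rfl⟩ := Nat.exists_eq_add_of_le' hm
  have horder : orderOf (11 : ZMod (2 * 7 ^ (n + 1))) = 3 * 7 ^ n := by
    rw [← orderOf_eleven_mod_seven_pow]
    exact_mod_cast ZMod.orderOf_intCast_mul_of_eq_one (a := 11)
      (Nat.Coprime.pow_right _ (by norm_num)) (by decide)
  have : Fact (2 < 2 * 7 ^ (n + 1)) := ⟨by have := Nat.one_le_pow n 7 (by norm_num); lia⟩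
  refine ⟨horder, ?_, pow_ne_neg_one_of_odd_orderOf ?_ ZMod.neg_one_ne_one⟩
  · rw [Nat.totient_mul (Nat.Coprime.pow_right _ (by norm_num)), Nat.totient_two,
      Nat.totient_prime_pow_succ (by norm_num)]
    lia
  · rw [horder]
    exact Odd.mul (by decide) (Odd.pow (by decide))
end
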